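/- Soundness of the (Skip) rule: for a finite nonempty well-formed symbolic trace τ, a dynamic logic formula φ, a WHILE statement s, an antecedent formula ψ, and a path-condition set pc, if the sequent ψ, pc ⇒ τ [s]φ is valid then the sequent ψ, pc ⇒ τ [skip; s]φ is valid. -/

import Mathlib

/-! # LAGC semantics: basic definitions

Program variables, values, expressions, starred expressions, symbolic states,
evaluation, concretisation, traces with events, the WHILE language with its
local evaluation (`valS`), the composition rule (`Step`), and global trace
semantics (`tracesOf`). -/

/-- Program variables. -/
abbrev Var := String

/-- Values: booleans and integers. -/
inductive Val where
  | bool : Bool → Val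
  | int  : Int → Val
deriving DecidableEq

/-- Binary operators. -/
inductive Op where
  | add | sub | mul | eqOp | lt
deriving DecidableEq

/-- Evaluation of the binary operators on values. -/
def applyOp : Op → Val → Val → Val
  | .add, .int a, .int b => .int (a + b)
  | .sub, .int a, .int b => .int (a - b)
  | .mul, .int a, .int b => .int (a * b)
  | .eqOp, a, b => .bool (decide (a = b))
  | .lt, .int a, .int b => .bool (decide (a < b))
  | _, _, _ => .int 0

/-- Expressions. -/
inductive Exp where
  | var : Var → Exp
  | val : Val → Exp
  | op  : Op → Exp → Exp → Exp
deriving DecidableEq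

/-- The set of variables occurring in an expression. -/
def Exp.vars : Exp → Set Var
  | .var x => {x}
  | .val _ => ∅
  | .op _ a b => a.vars ∪ b.vars

/-- Starred expressions: expressions extended with the symbol `∗`. -/
inductive Sexp where
  | star : Sexp
  | exp  : Exp → Sexp
deriving DecidableEq

/-- The set of variables occurring in a starred expression. -/
def Sexp.vars : Sexp → Set Var
  | .star => ∅
  | .exp e => e.vars

/-- A symbolic state: a partial map from variables to starred expressions. -/
abbrev SymState := Var → Option Sexp

/-- The domain of a symbolic state. -/
def domS (σ : SymState) : Set Var := {x | (σ x).isSome}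

/-- The symbolic variables of a state: those bound to `∗`. -/
def symbS (σ : SymState) : Set Var := {x | σ x = some .star}

/-- State update `σ[x ↦ se]`. -/
def updState (σ : SymState) (x : Var) (se : Sexp) : SymState :=
  fun y => if y = x then some se else σ y

/-- Well-formed state: every variable occurring in a value of the state is
a symbolic variable of the state. -/
def wfState (σ : SymState) : Prop :=
  ∀ y se, σ y = some se → Sexp.vars se ⊆ symbS σ

/-- Every defined variable is bound to a value (the paper's standing
assumption that states are simplified by propagation of concrete values). -/
def ValuedState (σ : SymState) : Prop :=
  ∀ x se, σ x = some se → ∃ v : Val, se = .exp (.val v)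

/-- A concrete, well-formed state: well-formed, no symbolic variables, and
(by the standing simplification assumption) every defined variable is bound
to a value. -/
def ConcreteState (σ : SymState) : Prop :=
  wfState σ ∧ symbS σ = ∅ ∧ ValuedState σ

/-- State extension `σ ⊆ σ'`. -/
def stateExtends (σ σ' : SymState) : Prop :=
  ∀ x se, σ x = some se → σ' x = some se

/-- The evaluation function `val_σ : Exp → Exp`. -/
def evalE (σ : SymState) : Exp → Exp
  | .var x =>
      match σ x with
      | some (.exp e) => e
      | _ => .var x
  | .val v => .val v
  | .op o a b =>
      match evalE σ a, evalE σ b with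
      | .val v1, .val v2 => .val (applyOp o v1 v2)
      | r1, r2 => .op o r1 r2

/-- A (partial) mapping of variables to values, viewed as a symbolic state. -/
def rhoState (ρ : Var → Option Val) : SymState :=
  fun x => (ρ x).map (fun v => .exp (.val v))

/-- Evaluation of a starred expression (`∗` is left untouched). -/
def evalSexp (σ : SymState) : Sexp → Sexp
  | .star => .star
  | .exp e => .exp (evalE σ e)

/-- `ρ` is a concretisation mapping for the state `σ`:
`dom(ρ) ∩ dom(σ) = symb(σ)`. -/
def ConcMap (ρ : Var → Option Val) (σ : SymState) : Prop :=
  {x | (ρ x).isSome} ∩ domS σ = symbS σ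

/-- The concretisation `ρ ∘ σ` of a state:
`ρ ∪ { x ↦ val_ρ(σ(x)) | x ∈ dom(σ) \ dom(ρ) }`. -/
def concretize (ρ : Var → Option Val) (σ : SymState) : SymState :=
  fun x =>
    match ρ x with
    | some v => some (.exp (.val v))
    | none => (σ x).map (evalSexp (rhoState ρ))

/-- Trace elements: symbolic states and event markers over lists of
expressions. -/
inductive TElem where
  | state : SymState → TElem
  | event : List Exp → TElem

/-- A possibly infinite symbolic trace, as a sequence of optional elements. -/
abbrev Trace := ℕ → Option TElem

/-- The finite trace given by a list, as a `Trace`. -/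
def ofList (l : List TElem) : Trace := fun n => l[n]?

/-- The states occurring in a trace. -/
def statesOf (τ : Trace) : Set SymState := {σ | ∃ n, τ n = some (.state σ)}

/-- The states occurring in a finite trace. -/
def listStates (l : List TElem) : Set SymState := {σ | TElem.state σ ∈ l}

/-- `V = ⋃_{σ ∈ τ} symb(σ)`: all symbolic variables of states of the trace. -/
def traceV (τ : Trace) : Set Var := ⋃ σ ∈ statesOf τ, symbS σ

/-- A path condition is a (finite) set of Boolean expressions; a conditioned
symbolic trace `pc ▷ τ` is well-formed if all its states are well-formed, no
variable symbolic somewhere is non-symbolic elsewhere, the path condition and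
events only mention symbolic variables of the trace, and every event is
immediately preceded and followed by one and the same state. -/
def wfTrace (pc : Set Exp) (τ : Trace) : Prop :=
  (∀ σ ∈ statesOf τ, wfState σ) ∧
  (∀ σ ∈ statesOf τ, (domS σ \ symbS σ) ∩ traceV τ = ∅) ∧
  (∀ e ∈ pc, Exp.vars e ⊆ traceV τ) ∧
  (∀ n es, τ n = some (.event es) → ∀ e ∈ es, Exp.vars e ⊆ traceV τ) ∧
  (∀ n es, τ n = some (.event es) →
    ∃ σ, 0 < n ∧ τ (n - 1) = some (.state σ) ∧ τ (n + 1) = some (.state σ))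

/-- Concretisation of a trace element. -/
def concElem (ρ : Var → Option Val) : TElem → TElem
  | .state σ => .state (concretize ρ σ)
  | .event es => .event (es.map (evalE (rhoState ρ)))

/-- Concretisation of a (possibly infinite) trace. -/
def concretizeT (ρ : Var → Option Val) (τ : Trace) : Trace :=
  fun n => (τ n).map (concElem ρ)

/-- Concretisation of a finite trace. -/
def concretizeL (ρ : Var → Option Val) (l : List TElem) : List TElem :=
  l.map (concElem ρ)

/-- `ρ` is a trace concretisation mapping for `τ`: a concretisation mapping
for every state of `τ`. -/
def TraceConcMap (ρ : Var → Option Val) (τ : Trace) : Prop :=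
  ∀ σ ∈ statesOf τ, ConcMap ρ σ

/-- `ρ` is a trace concretisation mapping for the finite trace `l`. -/
def TraceConcMapL (ρ : Var → Option Val) (l : List TElem) : Prop :=
  ∀ σ ∈ listStates l, ConcMap ρ σ

/-- Concretisation of a path condition: `val_ρ(pc)`. -/
def pcConc (ρ : Var → Option Val) (pc : Set Exp) : Set Exp :=
  (evalE (rhoState ρ)) '' pc

/-- A path condition is consistent if, fully evaluated, it does not
contain `ff`. -/
def pcConsistent (pc : Set Exp) : Prop :=
  ∀ e ∈ pc, evalE (fun _ => none) e ≠ .val (.bool false)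

/-! ## The WHILE language -/

/-- WHILE statements. -/
inductive Stmt where
  | skip   : Stmt
  | assign : Var → Exp → Stmt
  | ifS    : Exp → Stmt → Stmt
  | seq    : Stmt → Stmt → Stmt
  | whileS : Exp → Stmt → Stmt

/-- The variables of a statement. -/
def stmtVars : Stmt → Set Var
  | .skip => ∅
  | .assign x e => {x} ∪ e.vars
  | .ifS e s => e.vars ∪ stmtVars s
  | .seq a b => stmtVars a ∪ stmtVars b
  | .whileS e s => e.vars ∪ stmtVars s

/-- A conditioned continuation trace `pc ▷ τ · K(s')`; `k = none` is the
empty continuation `K(∘)`. -/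
structure CTrace where
  pc : Set Exp
  tr : List TElem
  k  : Option Stmt

/-- The Boolean expression `val_σ(e) = tt`. -/
def eqTT (σ : SymState) (e : Exp) : Exp :=
  .op .eqOp (evalE σ e) (.val (.bool true))

/-- The Boolean expression `val_σ(e) = ff`. -/
def eqFF (σ : SymState) (e : Exp) : Exp :=
  .op .eqOp (evalE σ e) (.val (.bool false))

/-- Continuation `K(r'; s)`, with the rewrite `∘; s ↝ s`. -/
def seqK : Option Stmt → Stmt → Option Stmt
  | none, s => some s
  | some r, s => some (.seq r s)

/-- Local evaluation of WHILE statements: `val_σ : Stmt → Set CTrace`.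
The `while` case is the unfolding `val_σ(while e {s}) = val_σ(if e {s; while e {s}})`. -/
def valS (σ : SymState) : Stmt → Set CTrace
  | .skip => {⟨∅, [.state σ], none⟩}
  | .assign x e =>
      {⟨∅, [.state σ, .state (updState σ x (.exp (evalE σ e)))], none⟩}
  | .ifS e s =>
      {⟨{eqTT σ e}, [.state σ], some s⟩, ⟨{eqFF σ e}, [.state σ], none⟩}
  | .whileS e s =>
      {⟨{eqTT σ e}, [.state σ], some (.seq s (.whileS e s))⟩,
       ⟨{eqFF σ e}, [.state σ], none⟩}
  | .seq r s => {ct | ∃ ct' ∈ valS σ r, ct = ⟨ct'.pc, ct'.tr, seqK ct'.k s⟩}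

/-- Local evaluation of continuations; the empty continuation evaluates to
the empty set of traces. -/
def valC (σ : SymState) : Option Stmt → Set CTrace
  | none => ∅
  | some s => valS σ s

/-- The semantic chop `τ₁ ∗∗ τ₂` on finite traces. -/
def chopL (τ₁ τ₂ : List TElem) : List TElem := τ₁.dropLast ++ τ₂

/-- Definedness of the semantic chop: `τ₁` ends with a state that is extended
by the first state of `τ₂`. -/
def ChopDefined (τ₁ τ₂ : List TElem) : Prop :=
  ∃ σ σ', τ₁.getLast? = some (.state σ) ∧ τ₂.head? = some (.state σ') ∧
    stateExtends σ σ'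

/-- Chop of a finite trace with a possibly infinite continuation trace. -/
def chopT (l : List TElem) (t : Trace) : Trace :=
  fun n => if n < l.length - 1 then l[n]? else t (n - (l.length - 1))

/-- A configuration of the composition rules: a finite (concrete) trace
together with a continuation. -/
abbrev Config := List TElem × Option Stmt

/-- The composition rule for WHILE: `(sh, K(s)) → (sh ∗∗ τ, K(s'))` whenever
`last(sh) = σ`, `pc ▷ τ·K(s') ∈ val_σ(s)` and `pc` is consistent. -/
def Step (c c' : Config) : Prop :=
  ∃ σ ct, c.1.getLast? = some (TElem.state σ) ∧
    ct ∈ valC σ c.2 ∧ pcConsistent ct.pc ∧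
    c' = (chopL c.1 ct.tr, ct.k)

/-- `t` is the limit of the growing sequence of finite traces `f`. -/
def IsLimit (f : ℕ → List TElem) (t : Trace) : Prop :=
  ∀ n, ∃ N, ∀ i, N ≤ i → (f i)[n]? = t n

/-- Global trace semantics `traces(s, σ)`: traces of maximal sequences of
applications of the composition rule starting at `(⟨σ⟩, K(s))`; for finite
maximal sequences (ending with the empty continuation) the resulting finite
trace, for infinite sequences the limit. -/
def tracesOf (s : Stmt) (σ : SymState) : Set Trace :=
  {t | (∃ sh : List TElem,
          Relation.ReflTransGen Step ([TElem.state σ], some s) (sh, none) ∧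
          t = ofList sh) ∨
       (∃ run : ℕ → Config, run 0 = ([TElem.state σ], some s) ∧
          (∀ n, Step (run n) (run (n + 1))) ∧
          IsLimit (fun n => (run n).1) t)}

open Classical in
/-- `σ[V ↦ ∗]`: bind every variable of `V` to `∗`. -/
noncomputable def updStarSet (σ : SymState) (V : Set Var) : SymState :=
  fun x => if x ∈ V then some Sexp.star else σ x

/-- The event trace `evTrio_V(σ, ē)` of length three: the state `σ`, the
event `ev(val_{σ'}(ē))`, and the state `σ' = σ[V ↦ ∗]`. -/
noncomputable def evTrio (σ : SymState) (es : List Exp) (V : Set Var) :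
    List TElem :=
  [.state σ, .event (es.map (evalE (updStarSet σ V))), .state (updStarSet σ V)]
/-! ## Dynamic logic for WHILE -/

/-- Logical variables, disjoint from program variables. -/
abbrev LVar := ℕ

/-- Terms over the signature (program variables, values, operators) and
logical variables. -/
inductive Term where
  | pvar : Var → Term
  | lvar : LVar → Term
  | val  : Val → Term
  | op   : Op → Term → Term → Term
deriving DecidableEq

/-- Embedding of program expressions into terms. -/
def expToTerm : Exp → Term
  | .var x => .pvar x
  | .val v => .val v
  | .op o a b => .op o (expToTerm a) (expToTerm b)

/-- Evaluation of terms in a symbolic state (logical variables are left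
untouched). -/
def evalT (σ : SymState) : Term → Term
  | .pvar x =>
      match σ x with
      | some (.exp e) => expToTerm e
      | _ => .pvar x
  | .lvar y => .lvar y
  | .val v => .val v
  | .op o a b =>
      match evalT σ a, evalT σ b with
      | .val v1, .val v2 => .val (applyOp o v1 v2)
      | r1, r2 => .op o r1 r2

/-- A term is variable-free when it contains no logical variables. -/
def Term.noLVar : Term → Prop
  | .pvar _ => True
  | .lvar _ => False
  | .val _ => True
  | .op _ a b => a.noLVar ∧ b.noLVar

/-- Substitution of a term for a logical variable in a term. -/
def Term.substL (x : LVar) (t : Term) : Term → Term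
  | .pvar y => .pvar y
  | .lvar y => if y = x then t else .lvar y
  | .val v => .val v
  | .op o a b => .op o (Term.substL x t a) (Term.substL x t b)

/-- Dynamic logic formulas: Boolean terms, propositional connectives,
quantifiers over logical variables, and modalities `[s]φ` for a possibly
empty (`none = ∘`) WHILE program `s`. -/
inductive DLF where
  | bterm : Term → DLF
  | not   : DLF → DLF
  | and   : DLF → DLF → DLF
  | or    : DLF → DLF → DLF
  | imp   : DLF → DLF → DLF
  | iff   : DLF → DLF → DLF
  | all   : LVar → DLF → DLF
  | ex    : LVar → DLF → DLF
  | box   : Option Stmt → DLF → DLF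

/-- Substitution of a term for a logical variable in a formula (programs are
unaffected; binders for the same variable stop the substitution). -/
def DLF.substL (x : LVar) (t : Term) : DLF → DLF
  | .bterm b => .bterm (b.substL x t)
  | .not φ => .not (φ.substL x t)
  | .and φ ψ => .and (φ.substL x t) (ψ.substL x t)
  | .or φ ψ => .or (φ.substL x t) (ψ.substL x t)
  | .imp φ ψ => .imp (φ.substL x t) (ψ.substL x t)
  | .iff φ ψ => .iff (φ.substL x t) (ψ.substL x t)
  | .all y φ => if y = x then .all y φ else .all y (φ.substL x t)
  | .ex y φ => if y = x then .ex y φ else .ex y (φ.substL x t)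
  | .box s φ => .box s (φ.substL x t)

/-- Structural depth of a formula. -/
def DLF.depth : DLF → ℕ
  | .bterm _ => 0
  | .not φ => φ.depth + 1
  | .and φ ψ => φ.depth + ψ.depth + 1
  | .or φ ψ => φ.depth + ψ.depth + 1
  | .imp φ ψ => φ.depth + ψ.depth + 1
  | .iff φ ψ => φ.depth + ψ.depth + 1
  | .all _ φ => φ.depth + 1
  | .ex _ φ => φ.depth + 1
  | .box _ φ => φ.depth + 1

theorem DLF.depth_substL (x : LVar) (t : Term) :
    ∀ φ : DLF, (φ.substL x t).depth = φ.depth := by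
  intro φ
  induction φ <;> simp only [DLF.substL, DLF.depth, *]
  case all y φ ih =>
    by_cases h : y = x <;> simp [h, DLF.depth, ih]
  case ex y φ ih =>
    by_cases h : y = x <;> simp [h, DLF.depth, ih]

/-- A trace is finite. -/
def finiteTr (t : Trace) : Prop := ∃ n, t n = none

/-- `σ` is the last element of the trace `t`, and is a state. -/
def lastStateTr (t : Trace) (σ : SymState) : Prop :=
  ∃ n, t n = some (.state σ) ∧ t (n + 1) = none

/-- Satisfaction of dynamic logic formulas in a concrete state:
`σ ⊨ B` iff `val_σ(B) = tt`; propositional connectives are standard;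
quantifiers by substitution of variable-free terms; `σ ⊨ [s]φ` iff every
finite trace of `traces(s, σ)` is nonempty, ends in a state, and that state
satisfies `φ`; `σ ⊨ [∘]φ` iff `σ ⊨ φ`. -/
def satS (σ : SymState) : DLF → Prop
  | .bterm b => evalT σ b = .val (.bool true)
  | .not φ => ¬ satS σ φ
  | .and φ ψ => satS σ φ ∧ satS σ ψ
  | .or φ ψ => satS σ φ ∨ satS σ ψ
  | .imp φ ψ => satS σ φ → satS σ ψ
  | .iff φ ψ => satS σ φ ↔ satS σ ψ
  | .all x φ => ∀ t : Term, t.noLVar → satS σ (φ.substL x t)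
  | .ex x φ => ∃ t : Term, t.noLVar ∧ satS σ (φ.substL x t)
  | .box none φ => satS σ φ
  | .box (some s) φ =>
      ∀ tr ∈ tracesOf s σ, finiteTr tr →
        ((tr 0).isSome ∧ ∃ σ', lastStateTr tr σ' ∧ satS σ' φ)
termination_by φ => φ.depth
decreasing_by all_goals simp [DLF.depth, DLF.depth_substL] <;> omega

/-- Validity of the sequent `ψ, pc ⇒ τ φ`: for every concretisation mapping
`ρ` of `τ`, if the first state of `ρ(τ)` satisfies `ψ` and every element of
`pc`, then the last state of `ρ(τ)` satisfies `φ`. -/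
def seqValid (ψ : DLF) (pc : Set Exp) (τ : List TElem) (φ : DLF) : Prop :=
  ∀ ρ : Var → Option Val, TraceConcMapL ρ τ →
    ∀ σ0 σl : SymState,
      (concretizeL ρ τ).head? = some (.state σ0) →
      (concretizeL ρ τ).getLast? = some (.state σl) →
      satS σ0 ψ → (∀ e ∈ pc, satS σ0 (.bterm (expToTerm e))) →
      satS σl φ

/-- First-order (program-free) formulas: no modalities. -/
def DLF.programFree : DLF → Prop
  | .bterm _ => True
  | .not φ => φ.programFree
  | .and φ ψ => φ.programFree ∧ ψ.programFree
  | .or φ ψ => φ.programFree ∧ ψ.programFree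
  | .imp φ ψ => φ.programFree ∧ ψ.programFree
  | .iff φ ψ => φ.programFree ∧ ψ.programFree
  | .all _ φ => φ.programFree
  | .ex _ φ => φ.programFree
  | .box _ _ => False
lemma step_skip_seq (sh : List TElem) (s : Stmt) (c' : Config)
    (hstep : Step (sh, some (.seq .skip s)) c') : c' = (sh, some s) := by
  obtain ⟨σ, ct, hlast, hct, _, rfl⟩ := hstep
  simp only [valC, valS, Set.mem_setOf_eq, Set.mem_singleton_iff] at hct
  obtain ⟨ct', hct', rfl⟩ := hct
  subst hct'
  simp only [seqK, chopL]
  congr 1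
  simp only at hlast
  have hne : sh ≠ [] := by rintro rfl; simp at hlast
  rw [List.getLast?_eq_getLast hne] at hlast
  have hx : sh.getLast hne = TElem.state σ := by injection hlast
  rw [← hx]
  exact List.dropLast_append_getLast hne

lemma tracesOf_skip_seq (s : Stmt) (σ : SymState) :
    tracesOf (.seq .skip s) σ ⊆ tracesOf s σ := by
  intro t ht
  rcases ht with ⟨sh, hrt, rfl⟩ | ⟨run, h0, hstep, hlim⟩
  · rcases hrt.cases_head with heq | ⟨c, hc, hrest⟩
    · exact absurd heq (by simp)
    · have hc' := step_skip_seq _ s _ hc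
      exact Or.inl ⟨sh, hc' ▸ hrest, rfl⟩
  · right
    refine ⟨fun n => run (n + 1), ?_, fun n => hstep (n + 1), ?_⟩
    · have h1 := hstep 0
      rw [h0] at h1
      exact step_skip_seq _ s _ h1
    · intro n
      obtain ⟨N, hN⟩ := hlim n
      exact ⟨N, fun i hi => hN (i + 1) (by omega)⟩

/-- Soundness of the (Skip) rule: if `ψ, pc ⇒ τ [s]φ` is
valid then `ψ, pc ⇒ τ [skip; s]φ` is valid. -/
theorem skip_rule_sound (ψ φ : DLF) (pc : Set Exp) (s : Stmt)
    (τ : List TElem) (hne : τ ≠ []) (hwf : wfTrace pc (ofList τ))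
    (h : seqValid ψ pc τ (.box (some s) φ)) :
    seqValid ψ pc τ (.box (some (.seq .skip s)) φ) := by
  intro ρ hρ σ0 σl hh hl hψ hpc
  have hbox := h ρ hρ σ0 σl hh hl hψ hpc
  rw [satS] at hbox ⊢
  intro tr htr hfin
  exact hbox tr (tracesOf_skip_seq s σl htr) hfin
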